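/- Let G be a finite simple graph with vertex set V, let a ≥ 1 and b ≥ 1 be integers, and let V_D' ⊆ V be such that every v ∈ V_D' satisfies |E(N^{100ab}(v))| ≤ 2b·|E(N^a(v))|. Let S_1, …, S_k (k ≥ 2) be pairwise disjoint vertex sets, each inducing a connected subgraph G[S_i] and each satisfying the invariant H. Let S := {v ∈ V : dist_G(v, S_1 ∪ … ∪ S_k) ≤ a}, suppose G[S] is connected, and suppose that for each u ∈ V_D', either N^a(u) ⊆ S_i for some 1 ≤ i ≤ k, or N^a(u) ∩ S = ∅. Then S satisfies the invariant H: (H1) for each u ∈ V_D', either N^a(u) ⊆ S or N^a(u) ∩ S = ∅; (H2) D_S ≤ 10a·N_S − (4a+1); (H3) N_S ≤ 2b. -/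

import Mathlib

open Finset

/-- The subgraph of `G` induced by the vertex set `S`, viewed as a graph on all of `V`
(vertices outside `S` are isolated). Distances between vertices of `S` in this graph agree
with distances in the induced subgraph `G[S]`. -/
def SimpleGraph.restrictS {V : Type*} (G : SimpleGraph V) (S : Set V) : SimpleGraph V where
  Adj u v := u ∈ S ∧ v ∈ S ∧ G.Adj u v
  symm := ⟨fun _ _ ⟨hu, hv, h⟩ => ⟨hv, hu, h.symm⟩⟩
  loopless := ⟨fun u ⟨_, _, h⟩ => G.irrefl h⟩

/-- `N_S`: the maximum size of a subset `T ⊆ S ∩ V_D'` whose elements are pairwise at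
`G`-distance greater than `2a`. -/
noncomputable def packing {V : Type*} [Fintype V] (G : SimpleGraph V) (VD : Set V)
    (a : ℕ) (S : Set V) : ℕ :=
  sSup {n | ∃ T : Finset V, ↑T ⊆ S ∩ VD ∧ T.card = n ∧
    ∀ u ∈ T, ∀ v ∈ T, u ≠ v → ((2 * a : ℕ) : ℕ∞) < G.edist u v}

/-- `D_S`: the diameter of the induced subgraph `G[S]`. -/
noncomputable def setDiam {V : Type*} (G : SimpleGraph V) (S : Set V) : ℕ∞ :=
  ⨆ u ∈ S, ⨆ v ∈ S, (G.restrictS S).edist u v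

/-- `E(S)`: the set of edges of `G` with both endpoints in `S`. -/
def edgesIn {V : Type*} [Fintype V] [DecidableEq V] (G : SimpleGraph V) [DecidableRel G.Adj]
    (S : Finset V) : Finset (Sym2 V) :=
  ((S ×ˢ S).filter fun p => G.Adj p.1 p.2).image fun p => s(p.1, p.2)

section AuxHIS

lemma restrictS_le_HIS {V : Type*} (G : SimpleGraph V) (S : Set V) : G.restrictS S ≤ G :=
  fun _ _ h => h.2.2

lemma restrictS_mono_HIS {V : Type*} (G : SimpleGraph V) {S T : Set V} (h : S ⊆ T) :
    G.restrictS S ≤ G.restrictS T :=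
  fun _ _ hadj => ⟨h hadj.1, h hadj.2.1, hadj.2.2⟩

lemma edist_end_of_mem_support_HIS {V : Type*} {G : SimpleGraph V} :
    ∀ {x w : V} (p : G.Walk x w), ∀ y ∈ p.support, G.edist y w ≤ p.length := by
  intro x w p
  induction p with
  | nil => intro y hy; simp at hy; subst hy; simp [SimpleGraph.edist_self]
  | cons h q ih =>
    intro y hy
    rw [SimpleGraph.Walk.support_cons, List.mem_cons] at hy
    rcases hy with rfl | hy'
    · exact SimpleGraph.edist_le _
    · exact (ih y hy').trans (by simp)

lemma restrict_edist_le_of_walk_HIS {V : Type*} {G : SimpleGraph V} {S : Set V} :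
    ∀ {x w : V} (p : G.Walk x w), (∀ y ∈ p.support, y ∈ S) →
      (G.restrictS S).edist x w ≤ p.length := by
  intro x w p
  induction p with
  | nil => intro; simp [SimpleGraph.edist_self]
  | cons h q ih =>
    intro hs
    have hx : _ ∈ S := hs _ (SimpleGraph.Walk.start_mem_support _)
    have hy : _ ∈ S := hs _ (by rw [SimpleGraph.Walk.support_cons]; exact List.mem_cons_of_mem _ q.start_mem_support)
    have h1 : (G.restrictS S).Adj _ _ := ⟨hx, hy, h⟩
    calc (G.restrictS S).edist _ _ ≤ (G.restrictS S).edist _ _ + (G.restrictS S).edist _ _ :=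
            SimpleGraph.edist_triangle
      _ ≤ 1 + q.length := by
            gcongr
            · exact (SimpleGraph.edist_le h1.toWalk).trans (by simp)
            · exact ih (fun y hy => hs y (by rw [SimpleGraph.Walk.support_cons]; exact List.mem_cons_of_mem _ hy))
      _ = _ := by simp [SimpleGraph.Walk.length_cons]; ring

lemma exists_midpoint_HIS {V : Type*} {G : SimpleGraph V} :
    ∀ {u v : V} (p : G.Walk u v) (m n : ℕ), p.length ≤ m + n →
      ∃ w, G.edist u w ≤ m ∧ G.edist w v ≤ n := by
  intro u v p
  induction p with
  | @nil x =>
    intro m n _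
    exact ⟨x, by simp [SimpleGraph.edist_self], by simp [SimpleGraph.edist_self]⟩
  | @cons x y w h q ih =>
    intro m n hlen
    match m with
    | 0 =>
      refine ⟨x, by simp [SimpleGraph.edist_self], ?_⟩
      exact (SimpleGraph.edist_le (SimpleGraph.Walk.cons h q)).trans (by exact_mod_cast by simpa using hlen)
    | m' + 1 =>
      obtain ⟨z, hz1, hz2⟩ := ih m' n (by rw [SimpleGraph.Walk.length_cons] at hlen; omega)
      refine ⟨z, ?_, hz2⟩
      calc G.edist x z ≤ G.edist x y + G.edist y z := SimpleGraph.edist_triangle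
        _ ≤ 1 + m' := by gcongr; exact (SimpleGraph.edist_le h.toWalk).trans (by simp)
        _ = (m' + 1 : ℕ) := by push_cast; ring

section walkComb
variable {V α : Type*}

lemma walk_last_prop_HIS {H : SimpleGraph V} (φ : V → α) :
    ∀ {u v : V} (p : H.Walk u v) (c : α), (∃ y ∈ p.support, φ y = c) →
      ∃ (x : V) (q : H.Walk x v), φ x = c ∧ (∀ y ∈ q.support.tail, φ y ≠ c) ∧
        (∀ y ∈ q.support, y ∈ p.support) := by
  intro u v p
  induction p with
  | @nil x =>
    intro c hc
    obtain ⟨y, hy, hφ⟩ := hc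
    simp only [SimpleGraph.Walk.support_nil, List.mem_singleton] at hy
    subst hy
    exact ⟨y, .nil, hφ, by simp, by simp⟩
  | @cons x y w h q ih =>
    intro c hc
    by_cases hq : ∃ z ∈ q.support, φ z = c
    · obtain ⟨x', q', h1, h2, h3⟩ := ih c hq
      refine ⟨x', q', h1, h2, fun z hz => ?_⟩
      rw [SimpleGraph.Walk.support_cons]
      exact List.mem_cons_of_mem _ (h3 z hz)
    · have hφx : φ x = c := by
        obtain ⟨z, hz, hφ⟩ := hc
        rw [SimpleGraph.Walk.support_cons, List.mem_cons] at hz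
        rcases hz with rfl | hz
        · exact hφ
        · exact absurd ⟨z, hz, hφ⟩ hq
      refine ⟨x, .cons h q, hφx, fun z hz => ?_, fun z hz => hz⟩
      rw [SimpleGraph.Walk.support_cons] at hz
      simp only [List.tail_cons] at hz
      exact fun hc' => hq ⟨z, hz, hc'⟩

lemma bridge_of_walk_HIS {H : SimpleGraph V} (φ : V → α) (I : Set α) :
    ∀ {u v : V} (p : H.Walk u v), φ u ∈ I → φ v ∉ I →
      ∃ y z, H.Adj y z ∧ φ y ∈ I ∧ φ z ∉ I := by
  intro u v p
  induction p with
  | nil => intro h1 h2; exact absurd h1 h2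
  | @cons x y w h q ih =>
    intro h1 h2
    by_cases hy : φ y ∈ I
    · exact ih hy h2
    · exact ⟨x, y, h, h1, hy⟩

variable [DecidableEq α] [DecidableEq V]

lemma walk_cluster_bound_HIS {H : SimpleGraph V} (φ : V → α) (wpt : V → V) (d : α → ℕ) (a : ℕ)
    (hpt : ∀ y z : V, φ y = φ z → H.edist (wpt y) (wpt z) ≤ (d (φ y) : ℕ∞))
    (hnear : ∀ y z : V, H.Adj y z → H.edist (wpt y) (wpt z) ≤ ((2*a+1 : ℕ) : ℕ∞)) :
    ∀ n : ℕ, ∀ {u v : V} (p : H.Walk u v), (p.support.toFinset.image φ).card ≤ n →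
      H.edist (wpt u) (wpt v) + ((2*a+1 : ℕ) : ℕ∞) ≤
        ((∑ i ∈ p.support.toFinset.image φ, (d i + 2*a+1) : ℕ) : ℕ∞) := by
  intro n
  induction n using Nat.strong_induction_on with
  | _ n ihn =>
  intro u v p hcard
  obtain ⟨x, q, hφx, htail, hsub⟩ := walk_last_prop_HIS φ p (φ u) ⟨u, p.start_mem_support, rfl⟩
  set J := p.support.toFinset.image φ with hJ
  have hφuJ : φ u ∈ J := mem_image.mpr ⟨u, List.mem_toFinset.mpr p.start_mem_support, rfl⟩
  cases q with
  | nil =>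
    have h1 : H.edist (wpt u) (wpt v) ≤ (d (φ u) : ℕ∞) := hpt u v hφx.symm
    calc H.edist (wpt u) (wpt v) + ((2*a+1 : ℕ) : ℕ∞)
        ≤ (d (φ u) : ℕ∞) + ((2*a+1 : ℕ) : ℕ∞) := by gcongr
      _ = ((d (φ u) + 2*a+1 : ℕ) : ℕ∞) := by push_cast; ring
      _ ≤ _ := by
          apply Nat.cast_le.mpr
          exact Finset.single_le_sum (f := fun i => d i + 2*a+1) (fun i _ => Nat.zero_le _) hφuJ
  | @cons x y w hadj q3 =>
    have htail3 : ∀ z ∈ q3.support, φ z ≠ φ u := by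
      intro z hz
      apply htail
      rw [SimpleGraph.Walk.support_cons]
      simpa using hz
    set J3 := q3.support.toFinset.image φ with hJ3
    have hJ3sub : J3 ⊆ J.erase (φ u) := by
      intro c hc
      obtain ⟨z, hz, rfl⟩ := mem_image.mp hc
      rw [List.mem_toFinset] at hz
      refine mem_erase.mpr ⟨htail3 z hz, mem_image.mpr ⟨z, ?_, rfl⟩⟩
      rw [List.mem_toFinset]
      exact hsub z (by rw [SimpleGraph.Walk.support_cons]; exact List.mem_cons_of_mem _ hz)
    have hlt : J3.card < n := by
      calc J3.card ≤ (J.erase (φ u)).card := Finset.card_le_card hJ3sub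
        _ < J.card := Finset.card_erase_lt_of_mem hφuJ
        _ ≤ n := hcard
    have ih3 := ihn J3.card hlt q3 le_rfl
    have hux : H.edist (wpt u) (wpt x) ≤ (d (φ u) : ℕ∞) := hpt u x hφx.symm
    have hxy : H.edist (wpt x) (wpt y) ≤ ((2*a+1 : ℕ) : ℕ∞) := hnear x y hadj
    have hsum : (d (φ u) + 2*a+1) + (∑ i ∈ J3, (d i + 2*a+1)) ≤ ∑ i ∈ J, (d i + 2*a+1) := by
      have hins : insert (φ u) J3 ⊆ J :=
        Finset.insert_subset hφuJ (hJ3sub.trans (Finset.erase_subset _ _))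
      have hnotmem : φ u ∉ J3 := fun hc => (Finset.mem_erase.mp (hJ3sub hc)).1 rfl
      calc (d (φ u) + 2*a+1) + (∑ i ∈ J3, (d i + 2*a+1))
          = ∑ i ∈ insert (φ u) J3, (d i + 2*a+1) := (Finset.sum_insert (f := fun i => d i + 2*a+1) hnotmem).symm
        _ ≤ _ := Finset.sum_le_sum_of_subset hins
    have h1 : H.edist (wpt u) (wpt v) ≤
        H.edist (wpt u) (wpt x) + H.edist (wpt x) (wpt y) + H.edist (wpt y) (wpt v) := by
      calc H.edist (wpt u) (wpt v) ≤ H.edist (wpt u) (wpt y) + H.edist (wpt y) (wpt v) :=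
            SimpleGraph.edist_triangle
        _ ≤ _ := by gcongr; exact SimpleGraph.edist_triangle
    calc H.edist (wpt u) (wpt v) + ((2*a+1 : ℕ) : ℕ∞)
        ≤ ((d (φ u) : ℕ∞) + ((2*a+1 : ℕ) : ℕ∞) + H.edist (wpt y) (wpt v)) + ((2*a+1 : ℕ) : ℕ∞) := by
          gcongr
          exact h1.trans (by gcongr)
      _ = ((d (φ u) : ℕ∞) + ((2*a+1 : ℕ) : ℕ∞)) + (H.edist (wpt y) (wpt v) + ((2*a+1 : ℕ) : ℕ∞)) := by
          ring
      _ ≤ ((d (φ u) : ℕ∞) + ((2*a+1 : ℕ) : ℕ∞)) + ((∑ i ∈ J3, (d i + 2*a+1) : ℕ) : ℕ∞) := by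
          gcongr
      _ = (((d (φ u) + 2*a+1) + ∑ i ∈ J3, (d i + 2*a+1) : ℕ) : ℕ∞) := by push_cast; ring
      _ ≤ _ := Nat.cast_le.mpr hsum

end walkComb

lemma enat_cancel_HIS {x y : ℕ∞} (c : ℕ) (h : x + (c : ℕ∞) ≤ y + (c : ℕ∞)) : x ≤ y :=
  (WithTop.add_le_add_iff_right (by simp : (c : ℕ∞) ≠ ⊤)).mp h

section packingAux
variable {V : Type*} [Fintype V] (G : SimpleGraph V) (VD : Set V) (a : ℕ) (S : Set V)

lemma packing_spec_HIS : ∃ T : Finset V, ↑T ⊆ S ∩ VD ∧ T.card = packing G VD a S ∧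
    ∀ u ∈ T, ∀ v ∈ T, u ≠ v → ((2 * a : ℕ) : ℕ∞) < G.edist u v := by
  classical
  have h1 : ({n | ∃ T : Finset V, ↑T ⊆ S ∩ VD ∧ T.card = n ∧
      ∀ u ∈ T, ∀ v ∈ T, u ≠ v → ((2 * a : ℕ) : ℕ∞) < G.edist u v} : Set ℕ).Nonempty :=
    ⟨0, ∅, by simp, by simp, by simp⟩
  have h2 : BddAbove {n | ∃ T : Finset V, ↑T ⊆ S ∩ VD ∧ T.card = n ∧
      ∀ u ∈ T, ∀ v ∈ T, u ≠ v → ((2 * a : ℕ) : ℕ∞) < G.edist u v} := by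
    refine ⟨Fintype.card V, fun n hn => ?_⟩
    obtain ⟨T, _, rfl, _⟩ := hn
    exact Finset.card_le_univ T
  obtain ⟨T, hT1, hT2, hT3⟩ := Nat.sSup_mem h1 h2
  exact ⟨T, hT1, hT2, hT3⟩

lemma le_packing_HIS (T : Finset V) (h1 : ↑T ⊆ S ∩ VD)
    (h2 : ∀ u ∈ T, ∀ v ∈ T, u ≠ v → ((2 * a : ℕ) : ℕ∞) < G.edist u v) :
    T.card ≤ packing G VD a S := by
  have hbdd : BddAbove {n | ∃ T : Finset V, ↑T ⊆ S ∩ VD ∧ T.card = n ∧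
      ∀ u ∈ T, ∀ v ∈ T, u ≠ v → ((2 * a : ℕ) : ℕ∞) < G.edist u v} := by
    refine ⟨Fintype.card V, fun n hn => ?_⟩
    obtain ⟨T, _, rfl, _⟩ := hn
    exact Finset.card_le_univ T
  exact le_csSup hbdd ⟨T, h1, rfl, h2⟩

end packingAux

lemma edgesIn_mono_HIS {V : Type*} [Fintype V] [DecidableEq V] (G : SimpleGraph V)
    [DecidableRel G.Adj] {S T : Finset V} (h : S ⊆ T) : edgesIn G S ⊆ edgesIn G T := by
  intro e he
  obtain ⟨p, hp, rfl⟩ := Finset.mem_image.mp he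
  rw [Finset.mem_filter, Finset.mem_product] at hp
  exact Finset.mem_image.mpr ⟨p, Finset.mem_filter.mpr ⟨Finset.mem_product.mpr
    ⟨h hp.1.1, h hp.1.2⟩, hp.2⟩, rfl⟩

lemma mem_edgesIn_endpoints_HIS {V : Type*} [Fintype V] [DecidableEq V] (G : SimpleGraph V)
    [DecidableRel G.Adj] {S : Finset V} {e : Sym2 V} (he : e ∈ edgesIn G S) :
    ∀ x ∈ e, x ∈ S := by
  obtain ⟨p, hp, rfl⟩ := Finset.mem_image.mp he
  rw [Finset.mem_filter, Finset.mem_product] at hp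
  intro x hx
  rcases Sym2.mem_iff.mp hx with rfl | rfl
  · exact hp.1.1
  · exact hp.1.2

end AuxHIS

/-- Lemma B.8, inductive step of the invariant `H`. Let `a, b ≥ 1` and let
`V_D' ⊆ V` be such that every `v ∈ V_D'` satisfies `|E(N^{100ab}(v))| ≤ 2b·|E(N^a(v))|`.
Let `S₁, …, S_k` (`k ≥ 2`) be pairwise disjoint vertex sets, each inducing a connected
subgraph and each satisfying the invariant `H`. Let
`S := {v : dist_G(v, S₁ ∪ ⋯ ∪ S_k) ≤ a}`, suppose `G[S]` is connected, and suppose that for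
each `u ∈ V_D'` either `N^a(u) ⊆ Sᵢ` for some `i`, or `N^a(u) ∩ S = ∅`. Then `S` satisfies
the invariant `H`:
(H1) for each `u ∈ V_D'`, either `N^a(u) ⊆ S` or `N^a(u) ∩ S = ∅`;
(H2) `D_S ≤ 10a·N_S − (4a+1)`, i.e. `D_S + (4a+1) ≤ 10a·N_S`;
(H3) `N_S ≤ 2b`. -/
theorem invariant_H_inductive_step
    {V : Type*} [Fintype V] [DecidableEq V] (G : SimpleGraph V) [DecidableRel G.Adj]
    (a b : ℕ) (ha : 1 ≤ a) (hb : 1 ≤ b) (VD : Set V)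
    (ball : V → ℕ → Finset V)
    (hball : ∀ v r x, x ∈ ball v r ↔ G.edist v x ≤ (r : ℕ∞))
    (hVD : ∀ v ∈ VD,
      (edgesIn G (ball v (100 * a * b))).card ≤ 2 * b * (edgesIn G (ball v a)).card)
    (k : ℕ) (hk : 2 ≤ k) (Sf : Fin k → Set V)
    (hdisj : ∀ i j, i ≠ j → Disjoint (Sf i) (Sf j))
    (hne : ∀ i, (Sf i).Nonempty)
    (hconn : ∀ i, ∀ u ∈ Sf i, ∀ v ∈ Sf i, (G.restrictS (Sf i)).Reachable u v)
    (hH1 : ∀ i, ∀ u ∈ VD,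
      (↑(ball u a) : Set V) ⊆ Sf i ∨ (↑(ball u a) : Set V) ∩ Sf i = ∅)
    (hH2 : ∀ i,
      setDiam G (Sf i) + ((4 * a + 1 : ℕ) : ℕ∞) ≤ ((10 * a * packing G VD a (Sf i) : ℕ) : ℕ∞))
    (hH3 : ∀ i, packing G VD a (Sf i) ≤ 2 * b)
    (S : Set V) (hS : S = {v | ∃ w ∈ ⋃ i, Sf i, G.edist v w ≤ (a : ℕ∞)})
    (hSne : S.Nonempty)
    (hSconn : ∀ u ∈ S, ∀ v ∈ S, (G.restrictS S).Reachable u v)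
    (hVDS : ∀ u ∈ VD,
      (∃ i, (↑(ball u a) : Set V) ⊆ Sf i) ∨ (↑(ball u a) : Set V) ∩ S = ∅) :
    (∀ u ∈ VD, (↑(ball u a) : Set V) ⊆ S ∨ (↑(ball u a) : Set V) ∩ S = ∅) ∧
    setDiam G S + ((4 * a + 1 : ℕ) : ℕ∞) ≤ ((10 * a * packing G VD a S : ℕ) : ℕ∞) ∧
    packing G VD a S ≤ 2 * b := by
  classical
  have hSmem : ∀ v : V, v ∈ S ↔ ∃ w ∈ ⋃ i, Sf i, G.edist v w ≤ (a : ℕ∞) := by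
    intro v; rw [hS]; exact Iff.rfl
  have hSfS : ∀ i, Sf i ⊆ S := by
    intro i x hx
    exact (hSmem x).mpr ⟨x, Set.mem_iUnion.mpr ⟨i, hx⟩, by simp [SimpleGraph.edist_self]⟩
  have hballself : ∀ u r, u ∈ ball u r := fun u r =>
    (hball u r u).mpr (by simp [SimpleGraph.edist_self])
  -- H1
  have hH1S : ∀ u ∈ VD, (↑(ball u a) : Set V) ⊆ S ∨ (↑(ball u a) : Set V) ∩ S = ∅ := by
    intro u hu
    rcases hVDS u hu with ⟨i, hi⟩ | hemp
    · exact Or.inl (hi.trans (hSfS i))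
    · exact Or.inr hemp
  -- locating a VD vertex of S in its cluster
  have hlocate : ∀ u ∈ VD, u ∈ S → ∃ i, (↑(ball u a) : Set V) ⊆ Sf i ∧ u ∈ Sf i := by
    intro u hu huS
    rcases hVDS u hu with ⟨i, hi⟩ | hemp
    · exact ⟨i, hi, hi (Finset.mem_coe.mpr (hballself u a))⟩
    · exfalso
      have : u ∈ (↑(ball u a) : Set V) ∩ S := ⟨Finset.mem_coe.mpr (hballself u a), huS⟩
      rw [hemp] at this
      exact this
  -- cross-cluster distance
  have hcross : ∀ (u v : V) (i j : Fin k), i ≠ j → (↑(ball u a) : Set V) ⊆ Sf i →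
      (↑(ball v a) : Set V) ⊆ Sf j → ((2 * a : ℕ) : ℕ∞) < G.edist u v := by
    intro u v i j hij hbi hbj
    by_contra hle
    push_neg at hle
    have hnt : G.edist u v ≠ ⊤ := by
      intro h
      rw [h, top_le_iff] at hle
      exact ENat.coe_ne_top _ hle
    obtain ⟨p, hp⟩ := SimpleGraph.exists_walk_of_edist_ne_top hnt
    have hplen : p.length ≤ a + a := by
      have : (p.length : ℕ∞) ≤ ((2 * a : ℕ) : ℕ∞) := hp ▸ hle
      have := Nat.cast_le.mp this
      omega
    obtain ⟨w, hw1, hw2⟩ := exists_midpoint_HIS p a a hplen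
    have hwi : w ∈ Sf i := hbi (Finset.mem_coe.mpr ((hball u a w).mpr hw1))
    have hwj : w ∈ Sf j := hbj (Finset.mem_coe.mpr ((hball v a w).mpr
      (by rwa [SimpleGraph.edist_comm] at hw2)))
    exact (hdisj i j hij).ne_of_mem hwi hwj rfl
  -- cluster packing numbers and diameters
  set Ni : Fin k → ℕ := fun i => packing G VD a (Sf i) with hNidef
  have hNibound : ∀ i, 4 * a + 1 ≤ 10 * a * Ni i := by
    intro i
    have h1 : ((4 * a + 1 : ℕ) : ℕ∞) ≤ ((10 * a * Ni i : ℕ) : ℕ∞) :=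
      le_trans le_add_self (hH2 i)
    exact Nat.cast_le.mp h1
  set d : Fin k → ℕ := fun i => 10 * a * Ni i - (4 * a + 1) with hddef
  have hd : ∀ i, d i + (4 * a + 1) = 10 * a * Ni i := fun i => Nat.sub_add_cancel (hNibound i)
  have hdiam_i : ∀ i, ∀ x ∈ Sf i, ∀ y ∈ Sf i,
      (G.restrictS S).edist x y ≤ (d i : ℕ∞) := by
    intro i x hx y hy
    have h1 : (G.restrictS S).edist x y ≤ (G.restrictS (Sf i)).edist x y :=
      SimpleGraph.edist_anti (restrictS_mono_HIS G (hSfS i))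
    have h2 : (G.restrictS (Sf i)).edist x y ≤ setDiam G (Sf i) := by
      apply le_iSup₂_of_le x hx
      exact le_iSup₂_of_le y hy le_rfl
    have h3 : setDiam G (Sf i) ≤ (d i : ℕ∞) := by
      apply enat_cancel_HIS (4 * a + 1)
      calc setDiam G (Sf i) + ((4 * a + 1 : ℕ) : ℕ∞)
          ≤ ((10 * a * Ni i : ℕ) : ℕ∞) := hH2 i
        _ = ((d i + (4 * a + 1) : ℕ) : ℕ∞) := by rw [hd i]
        _ = (d i : ℕ∞) + ((4 * a + 1 : ℕ) : ℕ∞) := by push_cast; ring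
    exact h1.trans (h2.trans h3)
  -- choice of nearby cluster point
  have hchoice : ∀ v : V, ∃ (i : Fin k) (w : V), w ∈ Sf i ∧
      (v ∈ S → (G.restrictS S).edist v w ≤ (a : ℕ∞)) := by
    intro v
    by_cases hv : v ∈ S
    · obtain ⟨w, hw, hdw⟩ := (hSmem v).mp hv
      obtain ⟨i, hwi⟩ := Set.mem_iUnion.mp hw
      have hnt : G.edist v w ≠ ⊤ := by
        intro h
        rw [h, top_le_iff] at hdw
        exact ENat.coe_ne_top _ hdw
      obtain ⟨p, hp⟩ := SimpleGraph.exists_walk_of_edist_ne_top hnt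
      have hplen : p.length ≤ a := by
        have : (p.length : ℕ∞) ≤ (a : ℕ∞) := hp ▸ hdw
        exact Nat.cast_le.mp this
      have hsupp : ∀ y ∈ p.support, y ∈ S := by
        intro y hy
        refine (hSmem y).mpr ⟨w, Set.mem_iUnion.mpr ⟨i, hwi⟩, ?_⟩
        exact (edist_end_of_mem_support_HIS p y hy).trans (Nat.cast_le.mpr hplen)
      have hre : (G.restrictS S).edist v w ≤ (a : ℕ∞) :=
        (restrict_edist_le_of_walk_HIS p hsupp).trans (Nat.cast_le.mpr hplen)
      exact ⟨i, w, hwi, fun _ => hre⟩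
    · exact ⟨⟨0, by omega⟩, (hne ⟨0, by omega⟩).choose, (hne ⟨0, by omega⟩).choose_spec,
        fun h => absurd h hv⟩
  choose φ wpt hwpt1 hwpt2 using hchoice
  have hpt : ∀ y z : V, φ y = φ z →
      (G.restrictS S).edist (wpt y) (wpt z) ≤ (d (φ y) : ℕ∞) := by
    intro y z hyz
    exact hdiam_i (φ y) (wpt y) (hwpt1 y) (wpt z) (hyz ▸ hwpt1 z)
  have hnear : ∀ y z : V, (G.restrictS S).Adj y z →
      (G.restrictS S).edist (wpt y) (wpt z) ≤ ((2 * a + 1 : ℕ) : ℕ∞) := by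
    intro y z hadj
    have hyS : y ∈ S := hadj.1
    have hzS : z ∈ S := hadj.2.1
    calc (G.restrictS S).edist (wpt y) (wpt z)
        ≤ (G.restrictS S).edist (wpt y) y + (G.restrictS S).edist y z
            + (G.restrictS S).edist z (wpt z) := by
          calc (G.restrictS S).edist (wpt y) (wpt z)
              ≤ (G.restrictS S).edist (wpt y) z + (G.restrictS S).edist z (wpt z) :=
                SimpleGraph.edist_triangle
            _ ≤ _ := by gcongr; exact SimpleGraph.edist_triangle
      _ ≤ (a : ℕ∞) + 1 + (a : ℕ∞) := by
          gcongr
          · rw [SimpleGraph.edist_comm]; exact hwpt2 y hyS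
          · exact (SimpleGraph.edist_le hadj.toWalk).trans (by simp)
          · exact hwpt2 z hzS
      _ = ((2 * a + 1 : ℕ) : ℕ∞) := by push_cast; ring
  -- global diameter bound
  set Csum : ℕ := ∑ i : Fin k, (d i + 2 * a + 1) with hCsumdef
  have hi0 : (0 : ℕ) < k := by omega
  have hCsum_ge : 2 * a + 1 ≤ Csum := by
    calc 2 * a + 1 ≤ d ⟨0, hi0⟩ + 2 * a + 1 := by omega
      _ ≤ Csum := Finset.single_le_sum (f := fun i => d i + 2 * a + 1)
          (fun i _ => Nat.zero_le _) (Finset.mem_univ _)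
  have hdS : ∀ u ∈ S, ∀ v ∈ S, (G.restrictS S).edist u v + ((2 * a + 1 : ℕ) : ℕ∞) ≤
      ((2 * a + Csum : ℕ) : ℕ∞) := by
    intro u hu v hv
    obtain ⟨p⟩ := hSconn u hu v hv
    have hQ := walk_cluster_bound_HIS φ wpt d a hpt hnear
      (p.support.toFinset.image φ).card p le_rfl
    have hJsub : (∑ i ∈ p.support.toFinset.image φ, (d i + 2 * a + 1)) ≤ Csum :=
      Finset.sum_le_sum_of_subset (Finset.subset_univ _)
    have h1 : (G.restrictS S).edist u v ≤
        (a : ℕ∞) + (G.restrictS S).edist (wpt u) (wpt v) + (a : ℕ∞) := by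
      calc (G.restrictS S).edist u v
          ≤ (G.restrictS S).edist u (wpt u) + (G.restrictS S).edist (wpt u) (wpt v)
            + (G.restrictS S).edist (wpt v) v := by
            calc (G.restrictS S).edist u v
                ≤ (G.restrictS S).edist u (wpt v) + (G.restrictS S).edist (wpt v) v :=
                  SimpleGraph.edist_triangle
              _ ≤ _ := by gcongr; exact SimpleGraph.edist_triangle
        _ ≤ _ := by
            gcongr
            · exact hwpt2 u hu
            · rw [SimpleGraph.edist_comm]; exact hwpt2 v hv
    calc (G.restrictS S).edist u v + ((2 * a + 1 : ℕ) : ℕ∞)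
        ≤ ((a : ℕ∞) + (G.restrictS S).edist (wpt u) (wpt v) + (a : ℕ∞))
            + ((2 * a + 1 : ℕ) : ℕ∞) := by gcongr
      _ = ((a : ℕ∞) + (a : ℕ∞)) +
            ((G.restrictS S).edist (wpt u) (wpt v) + ((2 * a + 1 : ℕ) : ℕ∞)) := by ring
      _ ≤ ((a : ℕ∞) + (a : ℕ∞)) + ((Csum : ℕ) : ℕ∞) := by
            gcongr
            exact hQ.trans (Nat.cast_le.mpr hJsub)
      _ = ((2 * a + Csum : ℕ) : ℕ∞) := by push_cast; ring
  have hDS : ∀ u ∈ S, ∀ v ∈ S, (G.restrictS S).edist u v ≤ ((Csum - 1 : ℕ) : ℕ∞) := by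
    intro u hu v hv
    apply enat_cancel_HIS (2 * a + 1)
    have heq : (Csum - 1) + (2 * a + 1) = 2 * a + Csum := by omega
    calc (G.restrictS S).edist u v + ((2 * a + 1 : ℕ) : ℕ∞)
        ≤ ((2 * a + Csum : ℕ) : ℕ∞) := hdS u hu v hv
      _ = ((Csum - 1 : ℕ) : ℕ∞) + ((2 * a + 1 : ℕ) : ℕ∞) := by
          rw [← heq]; push_cast; ring
  have hsetDiamS : setDiam G S ≤ ((Csum - 1 : ℕ) : ℕ∞) :=
    iSup₂_le fun u hu => iSup₂_le fun v hv => hDS u hu v hv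
  -- the per-cluster maximum packings
  choose Tc hTc1 hTc2 hTc3 using fun i => packing_spec_HIS G VD a (Sf i)
  have hTcSf : ∀ i, ∀ x ∈ Tc i, x ∈ Sf i := fun i x hx => (hTc1 i hx).1
  have hTcVD : ∀ i, ∀ x ∈ Tc i, x ∈ VD := fun i x hx => (hTc1 i hx).2
  -- biUnion of packings is a packing of S
  have hpack_pair : ∀ (I : Finset (Fin k)), ∀ u ∈ I.biUnion Tc, ∀ v ∈ I.biUnion Tc,
      u ≠ v → ((2 * a : ℕ) : ℕ∞) < G.edist u v := by
    intro I u hu v hv huv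
    obtain ⟨i, _, hui⟩ := Finset.mem_biUnion.mp hu
    obtain ⟨j, _, hvj⟩ := Finset.mem_biUnion.mp hv
    by_cases hij : i = j
    · subst hij
      exact hTc3 i u hui v hvj huv
    · obtain ⟨i', hbi', hui'⟩ := hlocate u (hTcVD i u hui) (hSfS i (hTcSf i u hui))
      obtain ⟨j', hbj', hvj'⟩ := hlocate v (hTcVD j v hvj) (hSfS j (hTcSf j v hvj))
      have hii : i' = i := by
        by_contra hcon
        exact (hdisj i' i hcon).ne_of_mem hui' (hTcSf i u hui) rfl
      have hjj : j' = j := by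
        by_contra hcon
        exact (hdisj j' j hcon).ne_of_mem hvj' (hTcSf j v hvj) rfl
      exact hcross u v i' j' (by rw [hii, hjj]; exact hij) hbi' hbj'
  have hpack_sub : ∀ (I : Finset (Fin k)), ↑(I.biUnion Tc) ⊆ S ∩ VD := by
    intro I x hx
    obtain ⟨i, _, hxi⟩ := Finset.mem_biUnion.mp hx
    exact ⟨hSfS i (hTcSf i x hxi), hTcVD i x hxi⟩
  have hpack_card : ∀ (I : Finset (Fin k)), (I.biUnion Tc).card = ∑ i ∈ I, Ni i := by
    intro I
    rw [Finset.card_biUnion]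
    · exact Finset.sum_congr rfl fun i _ => hTc2 i
    · intro i _ j _ hij
      rw [Function.onFun, Finset.disjoint_left]
      intro x hxi hxj
      exact (hdisj i j hij).ne_of_mem (hTcSf i x hxi) (hTcSf j x hxj) rfl
  have hNS_ge : ∑ i : Fin k, Ni i ≤ packing G VD a S := by
    have h := le_packing_HIS G VD a S (Finset.univ.biUnion Tc) (hpack_sub _) (hpack_pair _)
    rwa [hpack_card] at h
  -- arithmetic for H2
  have hsum_eq : Csum + 2 * a * k = 10 * a * (∑ i : Fin k, Ni i) := by
    have e1 : (∑ _i : Fin k, (2 * a) : ℕ) = 2 * a * k := by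
      simp [Finset.sum_const, Finset.card_univ, mul_comm]
    have e2 : Csum + 2 * a * k = ∑ i : Fin k, (d i + 2 * a + 1 + 2 * a) := by
      rw [← e1, hCsumdef, ← Finset.sum_add_distrib]
    have e3 : (∑ i : Fin k, (d i + 2 * a + 1 + 2 * a)) = ∑ i : Fin k, 10 * a * Ni i :=
      Finset.sum_congr rfl fun i _ => by rw [← hd i]; ring
    rw [e2, e3, Finset.mul_sum]
  have hH2S : setDiam G S + ((4 * a + 1 : ℕ) : ℕ∞) ≤
      ((10 * a * packing G VD a S : ℕ) : ℕ∞) := by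
    have hnat : (Csum - 1) + (4 * a + 1) ≤ 10 * a * packing G VD a S := by
      have h4 : 4 * a ≤ 2 * a * k := by nlinarith
      have h5 : 10 * a * (∑ i : Fin k, Ni i) ≤ 10 * a * packing G VD a S :=
        Nat.mul_le_mul_left _ hNS_ge
      omega
    calc setDiam G S + ((4 * a + 1 : ℕ) : ℕ∞)
        ≤ ((Csum - 1 : ℕ) : ℕ∞) + ((4 * a + 1 : ℕ) : ℕ∞) := by gcongr
      _ = (((Csum - 1) + (4 * a + 1) : ℕ) : ℕ∞) := by push_cast; ring
      _ ≤ _ := Nat.cast_le.mpr hnat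
  -- trace bound: packing of S is at most the sum of the cluster packing numbers
  have hNS_le : packing G VD a S ≤ ∑ i : Fin k, Ni i := by
    obtain ⟨T, hT1, hT2, hT3⟩ := packing_spec_HIS G VD a S
    rw [← hT2]
    have hsub : T ⊆ Finset.univ.biUnion (fun i => T.filter (· ∈ Sf i)) := by
      intro x hx
      have hxS : x ∈ S := (hT1 hx).1
      have hxVD : x ∈ VD := (hT1 hx).2
      obtain ⟨i, _, hxi⟩ := hlocate x hxVD hxS
      exact Finset.mem_biUnion.mpr ⟨i, Finset.mem_univ _,
        Finset.mem_filter.mpr ⟨hx, hxi⟩⟩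
    calc T.card ≤ (Finset.univ.biUnion fun i => T.filter (· ∈ Sf i)).card :=
          Finset.card_le_card hsub
      _ ≤ ∑ i : Fin k, (T.filter (· ∈ Sf i)).card := Finset.card_biUnion_le
      _ ≤ ∑ i : Fin k, Ni i := by
          apply Finset.sum_le_sum
          intro i _
          apply le_packing_HIS G VD a (Sf i)
          · intro x hx
            rw [Finset.mem_coe, Finset.mem_filter] at hx
            exact ⟨hx.2, (hT1 hx.1).2⟩
          · intro u hu v hv huv
            rw [Finset.mem_filter] at hu hv
            exact hT3 u hu.1 v hv.1 huv
  -- the growth lemma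
  have grow : ∀ m : ℕ, 2 * b + 1 ≤ ∑ i : Fin k, Ni i → ∀ I : Finset (Fin k), I.Nonempty →
      k - I.card ≤ m → (∑ i ∈ I, Ni i) ≤ 2 * b →
      (∀ x y : V, (∃ i ∈ I, x ∈ Sf i) → (∃ j ∈ I, y ∈ Sf j) →
        (G.restrictS S).edist x y ≤ ((∑ i ∈ I, (d i + 2 * a + 1) : ℕ) : ℕ∞)) →
      ∃ I' : Finset (Fin k), 2 * b + 1 ≤ ∑ i ∈ I', Ni i ∧ (∑ i ∈ I', Ni i) ≤ 4 * b ∧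
        (∀ x y : V, (∃ i ∈ I', x ∈ Sf i) → (∃ j ∈ I', y ∈ Sf j) →
          (G.restrictS S).edist x y ≤ ((∑ i ∈ I', (d i + 2 * a + 1) : ℕ) : ℕ∞)) := by
    intro m
    induction m with
    | zero =>
      intro hbig I hIne hIcard hIsum _
      exfalso
      have hIle : I.card ≤ k := by simpa using Finset.card_le_univ I
      have hIeq : I = Finset.univ := by
        apply Finset.eq_univ_of_card
        rw [Fintype.card_fin]
        omega
      rw [hIeq] at hIsum
      omega
    | succ m ih =>
      intro hbig I hIne hIcard hIsum hIdiam
      have hIneq : I ≠ Finset.univ := by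
        intro h
        rw [h] at hIsum
        omega
      obtain ⟨j0, hj0⟩ : ∃ j0, j0 ∉ I := by
        by_contra hcon
        push_neg at hcon
        exact hIneq (Finset.eq_univ_iff_forall.mpr hcon)
      obtain ⟨i0, hi0I⟩ := hIne
      obtain ⟨u0, hu0⟩ := hne i0
      obtain ⟨v0, hv0⟩ := hne j0
      have hu0S : u0 ∈ S := hSfS i0 hu0
      have hv0S : v0 ∈ S := hSfS j0 hv0
      have hacast : (a : ℕ∞) ≤ ((2 * a + 1 : ℕ) : ℕ∞) := Nat.cast_le.mpr (by omega)
      have hbridge : ∃ i1, i1 ∈ I ∧ ∃ j1, j1 ∉ I ∧ ∃ x0 y0, x0 ∈ Sf i1 ∧ y0 ∈ Sf j1 ∧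
          (G.restrictS S).edist x0 y0 ≤ ((2 * a + 1 : ℕ) : ℕ∞) := by
        by_cases hφu : φ u0 ∈ I
        · by_cases hφv : φ v0 ∈ I
          · refine ⟨φ v0, hφv, j0, hj0, wpt v0, v0, hwpt1 v0, hv0, ?_⟩
            rw [SimpleGraph.edist_comm]
            exact (hwpt2 v0 hv0S).trans hacast
          · obtain ⟨p⟩ := hSconn u0 hu0S v0 hv0S
            obtain ⟨y, z, hyz, hyI, hzI⟩ :=
              bridge_of_walk_HIS φ {c | c ∈ I} p hφu hφv
            exact ⟨φ y, hyI, φ z, hzI, wpt y, wpt z, hwpt1 y, hwpt1 z, hnear y z hyz⟩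
        · exact ⟨i0, hi0I, φ u0, hφu, u0, wpt u0, hu0, hwpt1 u0,
            (hwpt2 u0 hu0S).trans hacast⟩
      obtain ⟨i1, hi1I, j1, hj1I, x0, y0, hx0, hy0, hbr⟩ := hbridge
      set I' := insert j1 I with hI'def
      have hsum' : (∑ i ∈ I', (d i + 2 * a + 1)) =
          (d j1 + 2 * a + 1) + ∑ i ∈ I, (d i + 2 * a + 1) :=
        Finset.sum_insert hj1I
      have hcross' : ∀ x : V, (∃ i ∈ I, x ∈ Sf i) → ∀ y ∈ Sf j1,
          (G.restrictS S).edist x y ≤ ((∑ i ∈ I', (d i + 2 * a + 1) : ℕ) : ℕ∞) := by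
        intro x hx y hy
        have h1 : (G.restrictS S).edist x y ≤
            (G.restrictS S).edist x x0 + (G.restrictS S).edist x0 y0
              + (G.restrictS S).edist y0 y := by
          calc (G.restrictS S).edist x y
              ≤ (G.restrictS S).edist x y0 + (G.restrictS S).edist y0 y :=
                SimpleGraph.edist_triangle
            _ ≤ _ := by gcongr; exact SimpleGraph.edist_triangle
        calc (G.restrictS S).edist x y
            ≤ ((∑ i ∈ I, (d i + 2 * a + 1) : ℕ) : ℕ∞) + ((2 * a + 1 : ℕ) : ℕ∞)
              + ((d j1 : ℕ) : ℕ∞) := by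
              refine h1.trans ?_
              exact add_le_add (add_le_add (hIdiam x x0 hx ⟨i1, hi1I, hx0⟩) hbr)
                (hdiam_i j1 y0 hy0 y hy)
          _ = ((∑ i ∈ I', (d i + 2 * a + 1) : ℕ) : ℕ∞) := by
              rw [hsum']; push_cast; ring
      have hdiam' : ∀ x y : V, (∃ i ∈ I', x ∈ Sf i) → (∃ j ∈ I', y ∈ Sf j) →
          (G.restrictS S).edist x y ≤ ((∑ i ∈ I', (d i + 2 * a + 1) : ℕ) : ℕ∞) := by
        have hIsub : (∑ i ∈ I, (d i + 2 * a + 1)) ≤ ∑ i ∈ I', (d i + 2 * a + 1) := by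
          rw [hsum']; omega
        have hdj1 : (d j1 : ℕ) ≤ ∑ i ∈ I', (d i + 2 * a + 1) := by rw [hsum']; omega
        intro x y hx hy
        obtain ⟨i, hiI', hxi⟩ := hx
        obtain ⟨j, hjI', hyj⟩ := hy
        rw [hI'def, Finset.mem_insert] at hiI' hjI'
        rcases hiI' with rfl | hiI
        · rcases hjI' with rfl | hjI
          · exact (hdiam_i _ x hxi y hyj).trans (Nat.cast_le.mpr hdj1)
          · rw [SimpleGraph.edist_comm]
            exact hcross' y ⟨j, hjI, hyj⟩ x hxi
        · rcases hjI' with rfl | hjI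
          · exact hcross' x ⟨i, hiI, hxi⟩ y hyj
          · exact (hIdiam x y ⟨i, hiI, hxi⟩ ⟨j, hjI, hyj⟩).trans (Nat.cast_le.mpr hIsub)
      have hsumNi' : ∑ i ∈ I', Ni i = Ni j1 + ∑ i ∈ I, Ni i := Finset.sum_insert hj1I
      by_cases hbig' : 2 * b + 1 ≤ ∑ i ∈ I', Ni i
      · refine ⟨I', hbig', ?_, hdiam'⟩
        have hj1b : Ni j1 ≤ 2 * b := hH3 j1
        rw [hsumNi']
        omega
      · push_neg at hbig'
        refine ih hbig I' ⟨j1, Finset.mem_insert_self _ _⟩ ?_ (by omega) hdiam'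
        rw [hI'def, Finset.card_insert_of_notMem hj1I]
        omega
  -- H3
  have hH3S : packing G VD a S ≤ 2 * b := by
    by_contra hcon
    push_neg at hcon
    have hbig : 2 * b + 1 ≤ ∑ i : Fin k, Ni i := le_trans (by omega) hNS_le
    -- start growing from the singleton {⟨0, _⟩}
    have hinitdiam : ∀ x y : V, (∃ i ∈ ({⟨0, hi0⟩} : Finset (Fin k)), x ∈ Sf i) →
        (∃ j ∈ ({⟨0, hi0⟩} : Finset (Fin k)), y ∈ Sf j) →
        (G.restrictS S).edist x y ≤
          ((∑ i ∈ ({⟨0, hi0⟩} : Finset (Fin k)), (d i + 2 * a + 1) : ℕ) : ℕ∞) := by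
      intro x y hx hy
      obtain ⟨i, hi, hxi⟩ := hx
      obtain ⟨j, hj, hyj⟩ := hy
      rw [Finset.mem_singleton] at hi hj
      subst hi; subst hj
      refine (hdiam_i _ x hxi y hyj).trans (Nat.cast_le.mpr ?_)
      rw [Finset.sum_singleton]
      omega
    obtain ⟨I', hI'1, hI'2, hI'3⟩ := grow k hbig {⟨0, hi0⟩}
      (Finset.singleton_nonempty _) (by omega)
      (by rw [Finset.sum_singleton]; exact hH3 _) hinitdiam
    set Tst := I'.biUnion Tc with hTstdef
    have hTstcard : Tst.card = ∑ i ∈ I', Ni i := hpack_card I'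
    have hTstpair := hpack_pair I'
    have hTstsub := hpack_sub I'
    have hTstdist : ∀ u ∈ Tst, ∀ v ∈ Tst, G.edist u v ≤ ((40 * a * b : ℕ) : ℕ∞) := by
      intro u hu v hv
      obtain ⟨i, hiI, hui⟩ := Finset.mem_biUnion.mp hu
      obtain ⟨j, hjI, hvj⟩ := Finset.mem_biUnion.mp hv
      have h1 : G.edist u v ≤ (G.restrictS S).edist u v :=
        SimpleGraph.edist_anti (restrictS_le_HIS G S)
      have h2 := hI'3 u v ⟨i, hiI, hTcSf i u hui⟩ ⟨j, hjI, hTcSf j v hvj⟩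
      have h3 : (∑ i ∈ I', (d i + 2 * a + 1)) ≤ 40 * a * b := by
        calc (∑ i ∈ I', (d i + 2 * a + 1)) ≤ ∑ i ∈ I', 10 * a * Ni i := by
              apply Finset.sum_le_sum
              intro i _
              have := hd i
              omega
          _ = 10 * a * ∑ i ∈ I', Ni i := (Finset.mul_sum _ _ _).symm
          _ ≤ 10 * a * (4 * b) := Nat.mul_le_mul_left _ hI'2
          _ = 40 * a * b := by ring
      exact h1.trans (h2.trans (Nat.cast_le.mpr h3))
    have hTstne : Tst.Nonempty := by
      rw [← Finset.card_pos, hTstcard]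
      omega
    obtain ⟨us, husT, hmin⟩ :=
      Finset.exists_min_image Tst (fun v => (edgesIn G (ball v a)).card) hTstne
    set m0 := (edgesIn G (ball us a)).card with hm0def
    have husVD : us ∈ VD := (hTstsub (Finset.mem_coe.mpr husT)).2
    have hball_sub : ∀ v ∈ Tst, ball v a ⊆ ball us (100 * a * b) := by
      intro v hv x hx
      apply (hball us _ x).mpr
      have h1 : G.edist v x ≤ (a : ℕ∞) := (hball v a x).mp hx
      calc G.edist us x ≤ G.edist us v + G.edist v x := SimpleGraph.edist_triangle
        _ ≤ ((40 * a * b : ℕ) : ℕ∞) + (a : ℕ∞) := add_le_add (hTstdist us husT v hv) h1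
        _ = ((40 * a * b + a : ℕ) : ℕ∞) := by push_cast; ring
        _ ≤ ((100 * a * b : ℕ) : ℕ∞) := Nat.cast_le.mpr (by nlinarith)
    have hdisjE : ∀ u ∈ Tst, ∀ v ∈ Tst, u ≠ v →
        Disjoint (edgesIn G (ball u a)) (edgesIn G (ball v a)) := by
      intro u hu v hv huv
      rw [Finset.disjoint_left]
      intro e heu hev
      induction e with
      | _ x y =>
        have hx1 : x ∈ ball u a := mem_edgesIn_endpoints_HIS G heu x (Sym2.mem_mk_left x y)
        have hx2 : x ∈ ball v a := mem_edgesIn_endpoints_HIS G hev x (Sym2.mem_mk_left x y)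
        have h2a : G.edist u v ≤ ((2 * a : ℕ) : ℕ∞) := by
          calc G.edist u v ≤ G.edist u x + G.edist x v := SimpleGraph.edist_triangle
            _ ≤ (a : ℕ∞) + (a : ℕ∞) := by
                refine add_le_add ((hball u a x).mp hx1) ?_
                rw [SimpleGraph.edist_comm]
                exact (hball v a x).mp hx2
            _ = ((2 * a : ℕ) : ℕ∞) := by push_cast; ring
        exact absurd (hTstpair u hu v hv huv) (not_lt.mpr h2a)
    have hcount : Tst.card * m0 ≤ 2 * b * m0 := by
      calc Tst.card * m0 = Tst.card • m0 := (smul_eq_mul _ _).symm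
        _ ≤ ∑ v ∈ Tst, (edgesIn G (ball v a)).card :=
            Finset.card_nsmul_le_sum Tst _ m0 (fun v hv => hmin v hv)
        _ = (Tst.biUnion (fun v => edgesIn G (ball v a))).card :=
            (Finset.card_biUnion hdisjE).symm
        _ ≤ (edgesIn G (ball us (100 * a * b))).card := by
            apply Finset.card_le_card
            apply Finset.biUnion_subset.mpr
            intro v hv
            exact edgesIn_mono_HIS G (hball_sub v hv)
        _ ≤ 2 * b * m0 := hVD us husVD
    have hTst2b : 2 * b + 1 ≤ Tst.card := by rw [hTstcard]; omega
    have hm0 : m0 = 0 := by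
      have h1 : (2 * b + 1) * m0 ≤ Tst.card * m0 := Nat.mul_le_mul_right _ hTst2b
      have h2 : (2 * b + 1) * m0 ≤ 2 * b * m0 := h1.trans hcount
      nlinarith
    have hiso : ∀ y : V, ¬ G.Adj us y := by
      intro y hadj
      have hymem : y ∈ ball us a := by
        apply (hball us a y).mpr
        calc G.edist us y ≤ (1 : ℕ∞) :=
              (SimpleGraph.edist_le hadj.toWalk).trans (by simp)
          _ ≤ (a : ℕ∞) := by exact_mod_cast Nat.one_le_cast.mpr ha
      have hmem : s(us, y) ∈ edgesIn G (ball us a) :=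
        Finset.mem_image.mpr ⟨(us, y), Finset.mem_filter.mpr
          ⟨Finset.mem_product.mpr ⟨hballself us a, hymem⟩, hadj⟩, rfl⟩
      have : 0 < m0 := Finset.card_pos.mpr ⟨_, hmem⟩
      omega
    obtain ⟨ist, histI, husTi⟩ := Finset.mem_biUnion.mp husT
    have husSf : us ∈ Sf ist := hTcSf ist us husTi
    have hk1 : (1 : ℕ) < k := by omega
    obtain ⟨jj, hjj⟩ : ∃ jj : Fin k, jj ≠ ist := by
      rcases eq_or_ne ist ⟨0, hi0⟩ with h | h
      · exact ⟨⟨1, hk1⟩, by rw [h]; simp [Fin.ext_iff]⟩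
      · exact ⟨⟨0, hi0⟩, h.symm⟩
    obtain ⟨vv, hvv⟩ := hne jj
    have husS : us ∈ S := hSfS ist husSf
    have hvvS : vv ∈ S := hSfS jj hvv
    obtain ⟨p⟩ := hSconn us husS vv hvvS
    cases p with
    | nil => exact (hdisj jj ist hjj).ne_of_mem hvv husSf rfl
    | cons hadj q => exact hiso _ hadj.2.2
  exact ⟨hH1S, hH2S, hH3S⟩
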